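/- Let k be a field and consider the polynomial ring k[u,v,S,T]. The radical of the ideal (uv, uS + vT) equals the ideal (uv, uS, vT), and the minimal prime ideals containing (uv, uS + vT) are exactly the three primes (u, v), (S, v), and (T, u). -/
import Mathlib


open MvPolynomial

noncomputable section

section Aux

variable {k : Type*} [Field k]

lemma aux_prime (a b c d : Fin 4) (hba : b ≠ a) (hca : c ≠ a) (hcb : c ≠ b)
    (hda : d ≠ a) (hdb : d ≠ b) (hdc : d ≠ c)
    (hcover : ∀ i : Fin 4, i = a ∨ i = b ∨ i = c ∨ i = d) :
    (Ideal.span {(X a : MvPolynomial (Fin 4) k), X b}).IsPrime := by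
  set φ : MvPolynomial (Fin 4) k →ₐ[k] MvPolynomial (Fin 2) k :=
    aeval (fun i : Fin 4 => if i = a then 0 else if i = b then 0 else if i = c then X 0 else X 1)
  set ψ : MvPolynomial (Fin 2) k →ₐ[k] MvPolynomial (Fin 4) k :=
    aeval (fun i : Fin 2 => if i = 0 then X c else X d)
  have hker : Ideal.span {(X a : MvPolynomial (Fin 4) k), X b} = RingHom.ker φ := by
    apply le_antisymm
    · rw [Ideal.span_le]
      rintro x (rfl | rfl) <;> simp [RingHom.mem_ker, φ, hba]
    · intro f hf
      rw [RingHom.mem_ker] at hf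
      have key : (Ideal.Quotient.mkₐ k (Ideal.span {(X a : MvPolynomial (Fin 4) k), X b})).comp
          (ψ.comp φ) = Ideal.Quotient.mkₐ k _ := by
        apply MvPolynomial.algHom_ext
        intro i
        rcases hcover i with rfl | rfl | rfl | rfl
        · have h0 : φ (X i) = 0 := by simp [φ]
          rw [AlgHom.comp_apply, AlgHom.comp_apply, h0, map_zero, map_zero, eq_comm,
            Ideal.Quotient.mkₐ_eq_mk, Ideal.Quotient.eq_zero_iff_mem]
          exact Ideal.subset_span (by simp)
        · have h0 : φ (X i) = 0 := by simp [φ, hba]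
          rw [AlgHom.comp_apply, AlgHom.comp_apply, h0, map_zero, map_zero, eq_comm,
            Ideal.Quotient.mkₐ_eq_mk, Ideal.Quotient.eq_zero_iff_mem]
          exact Ideal.subset_span (by simp)
        · have h0 : ψ (φ (X i)) = X i := by simp [φ, ψ, hca, hcb]
          rw [AlgHom.comp_apply, AlgHom.comp_apply, h0]
        · have h0 : ψ (φ (X i)) = X i := by simp [φ, ψ, hda, hdb, hdc]
          rw [AlgHom.comp_apply, AlgHom.comp_apply, h0]
      have := congrArg (fun g => g f) key
      simp only [AlgHom.comp_apply, hf, map_zero] at this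
      rwa [eq_comm, Ideal.Quotient.mkₐ_eq_mk, Ideal.Quotient.eq_zero_iff_mem] at this
  rw [hker]
  exact RingHom.ker_isPrime φ

lemma aux_not_mem (a b e : Fin 4) (h1 : e ≠ a) (h2 : e ≠ b) :
    (X e : MvPolynomial (Fin 4) k) ∉ Ideal.span {(X a : MvPolynomial (Fin 4) k), X b} := by
  rw [show ({X a, X b} : Set (MvPolynomial (Fin 4) k)) = X '' {a, b} by rw [Set.image_pair]]
  rw [mem_ideal_span_X_image]
  intro h
  obtain ⟨i, hi, hni⟩ := h (Finsupp.single e 1) (by simp [support_X])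
  rw [Finsupp.single_apply_ne_zero] at hni
  rcases hi with rfl | rfl
  · exact h1 hni.1.symm
  · exact h2 hni.1.symm

lemma aux_XX (i j : Fin 4) : (X i * X j : MvPolynomial (Fin 4) k) =
    monomial (Finsupp.single i 1 + Finsupp.single j 1) 1 := by
  rw [X, X, monomial_mul, one_mul]

lemma aux_inf_le :
    Ideal.span {(X 0 : MvPolynomial (Fin 4) k), X 1} ⊓
      Ideal.span {(X 2 : MvPolynomial (Fin 4) k), X 1} ⊓
      Ideal.span {(X 3 : MvPolynomial (Fin 4) k), X 0} ≤
    Ideal.span {(X 0 * X 1 : MvPolynomial (Fin 4) k), X 0 * X 2, X 1 * X 3} := by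
  have him : ∀ a b : Fin 4, ({X a, X b} : Set (MvPolynomial (Fin 4) k)) = X '' {a, b} := by
    intro a b; rw [Set.image_pair]
  intro f hf
  rw [Ideal.mem_inf, Ideal.mem_inf] at hf
  obtain ⟨⟨h1, h2⟩, h3⟩ := hf
  rw [him, mem_ideal_span_X_image] at h1 h2 h3
  have hJ : ({X 0 * X 1, X 0 * X 2, X 1 * X 3} : Set (MvPolynomial (Fin 4) k)) =
      (fun s => monomial s (1 : k)) ''
        {Finsupp.single 0 1 + Finsupp.single 1 1, Finsupp.single 0 1 + Finsupp.single 2 1,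
         Finsupp.single 1 1 + Finsupp.single 3 1} := by
    rw [Set.image_insert_eq, Set.image_pair, aux_XX, aux_XX, aux_XX]
  rw [hJ, mem_ideal_span_monomial_image]
  intro m hm
  obtain ⟨i1, hi1, hn1⟩ := h1 m hm
  obtain ⟨i2, hi2, hn2⟩ := h2 m hm
  obtain ⟨i3, hi3, hn3⟩ := h3 m hm
  simp only [Set.mem_insert_iff, Set.mem_singleton_iff] at hi1 hi2 hi3 ⊢
  have hle : ∀ a b : Fin 4, a ≠ b → m a ≠ 0 → m b ≠ 0 →
      Finsupp.single a 1 + Finsupp.single b 1 ≤ m := by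
    intro a b hab ha hb
    rw [Finsupp.le_def]
    intro i
    rw [Finsupp.add_apply, Finsupp.single_apply, Finsupp.single_apply]
    split_ifs with hA hB hB
    · exact absurd (hA.trans hB.symm) hab
    · subst hA; omega
    · subst hB; omega
    · omega
  rcases hi1 with rfl | rfl
  · rcases hi2 with rfl | rfl
    · exact ⟨_, Or.inr (Or.inl rfl), hle _ _ (by decide) hn1 hn2⟩
    · exact ⟨_, Or.inl rfl, hle _ _ (by decide) hn1 hn2⟩
  · rcases hi3 with rfl | rfl
    · exact ⟨_, Or.inr (Or.inr rfl), hle _ _ (by decide) hn1 hn3⟩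
    · exact ⟨_, Or.inl rfl, hle _ _ (by decide) hn3 hn1⟩

end Aux

/-- in `k[u,v,S,T]` (variables `u = X 0`, `v = X 1`, `S = X 2`, `T = X 3`),
the radical of `(uv, uS + vT)` is `(uv, uS, vT)`, and the minimal primes over
`(uv, uS + vT)` are exactly `(u, v)`, `(S, v)` and `(T, u)`. -/
theorem stmt_10 (k : Type*) [Field k] :
    (Ideal.span {(X 0 * X 1 : MvPolynomial (Fin 4) k), X 0 * X 2 + X 1 * X 3}).radical =
      Ideal.span {(X 0 * X 1 : MvPolynomial (Fin 4) k), X 0 * X 2, X 1 * X 3} ∧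
    (Ideal.span {(X 0 * X 1 : MvPolynomial (Fin 4) k),
        X 0 * X 2 + X 1 * X 3}).minimalPrimes =
      {Ideal.span {(X 0 : MvPolynomial (Fin 4) k), X 1},
       Ideal.span {(X 2 : MvPolynomial (Fin 4) k), X 1},
       Ideal.span {(X 3 : MvPolynomial (Fin 4) k), X 0}} := by
  set I : Ideal (MvPolynomial (Fin 4) k) :=
    Ideal.span {X 0 * X 1, X 0 * X 2 + X 1 * X 3} with hI
  set J : Ideal (MvPolynomial (Fin 4) k) :=
    Ideal.span {X 0 * X 1, X 0 * X 2, X 1 * X 3} with hJdef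
  set P1 : Ideal (MvPolynomial (Fin 4) k) := Ideal.span {X 0, X 1} with hP1def
  set P2 : Ideal (MvPolynomial (Fin 4) k) := Ideal.span {X 2, X 1} with hP2def
  set P3 : Ideal (MvPolynomial (Fin 4) k) := Ideal.span {X 3, X 0} with hP3def
  have hX : ∀ a b : Fin 4, (X a : MvPolynomial (Fin 4) k) ∈ Ideal.span {(X a : MvPolynomial (Fin 4) k), X b} :=
    fun a b => Ideal.subset_span (by simp)
  have hX' : ∀ a b : Fin 4, (X b : MvPolynomial (Fin 4) k) ∈ Ideal.span {(X a : MvPolynomial (Fin 4) k), X b} :=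
    fun a b => Ideal.subset_span (by simp)
  have hP1 : P1.IsPrime := aux_prime 0 1 2 3 (by decide) (by decide) (by decide)
    (by decide) (by decide) (by decide) (by decide)
  have hP2 : P2.IsPrime := aux_prime 2 1 0 3 (by decide) (by decide) (by decide)
    (by decide) (by decide) (by decide) (by decide)
  have hP3 : P3.IsPrime := aux_prime 3 0 1 2 (by decide) (by decide) (by decide)
    (by decide) (by decide) (by decide) (by decide)
  have huvI : (X 0 * X 1 : MvPolynomial (Fin 4) k) ∈ I := Ideal.subset_span (by simp)
  have hsumI : (X 0 * X 2 + X 1 * X 3 : MvPolynomial (Fin 4) k) ∈ I := Ideal.subset_span (by simp)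
  have hIP1 : I ≤ P1 := by
    rw [hI, Ideal.span_le]
    rintro x (rfl | rfl)
    · exact Ideal.mul_mem_right _ _ (hX 0 1)
    · exact add_mem (Ideal.mul_mem_right _ _ (hX 0 1)) (Ideal.mul_mem_right _ _ (hX' 0 1))
  have hIP2 : I ≤ P2 := by
    rw [hI, Ideal.span_le]
    rintro x (rfl | rfl)
    · exact Ideal.mul_mem_left _ _ (hX' 2 1)
    · exact add_mem (Ideal.mul_mem_left _ _ (hX 2 1)) (Ideal.mul_mem_right _ _ (hX' 2 1))
  have hIP3 : I ≤ P3 := by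
    rw [hI, Ideal.span_le]
    rintro x (rfl | rfl)
    · exact Ideal.mul_mem_right _ _ (hX' 3 0)
    · exact add_mem (Ideal.mul_mem_right _ _ (hX' 3 0)) (Ideal.mul_mem_left _ _ (hX 3 0))
  have hJP1 : J ≤ P1 := by
    rw [hJdef, Ideal.span_le]
    rintro x (rfl | rfl | rfl)
    · exact Ideal.mul_mem_right _ _ (hX 0 1)
    · exact Ideal.mul_mem_right _ _ (hX 0 1)
    · exact Ideal.mul_mem_right _ _ (hX' 0 1)
  have hJP2 : J ≤ P2 := by
    rw [hJdef, Ideal.span_le]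
    rintro x (rfl | rfl | rfl)
    · exact Ideal.mul_mem_left _ _ (hX' 2 1)
    · exact Ideal.mul_mem_left _ _ (hX 2 1)
    · exact Ideal.mul_mem_right _ _ (hX' 2 1)
  have hJP3 : J ≤ P3 := by
    rw [hJdef, Ideal.span_le]
    rintro x (rfl | rfl | rfl)
    · exact Ideal.mul_mem_right _ _ (hX' 3 0)
    · exact Ideal.mul_mem_right _ _ (hX' 3 0)
    · exact Ideal.mul_mem_left _ _ (hX 3 0)
  have hJeq : J = P1 ⊓ P2 ⊓ P3 :=
    le_antisymm (le_inf (le_inf hJP1 hJP2) hJP3) aux_inf_le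
  have hrad : I.radical = J := by
    apply le_antisymm
    · have hIJ : I ≤ J := by
        rw [hI, Ideal.span_le]
        rintro x (rfl | rfl)
        · exact Ideal.subset_span (by simp)
        · exact add_mem (Ideal.subset_span (by simp)) (Ideal.subset_span (by simp))
      have hJrad : J.radical = J := by
        rw [hJeq]
        apply le_antisymm _ Ideal.le_radical
        refine le_inf (le_inf ?_ ?_) ?_
        · exact (Ideal.radical_mono (le_trans inf_le_left inf_le_left)).trans hP1.radical.le
        · exact (Ideal.radical_mono (le_trans inf_le_left inf_le_right)).trans hP2.radical.le
        · exact (Ideal.radical_mono inf_le_right).trans hP3.radical.le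
      calc I.radical ≤ J.radical := Ideal.radical_mono hIJ
        _ = J := hJrad
    · rw [hJdef, Ideal.span_le]
      rintro x (rfl | rfl | rfl)
      · exact Ideal.le_radical huvI
      · refine Ideal.mem_radical_iff.mpr ⟨2, ?_⟩
        have h : (X 0 * X 2 : MvPolynomial (Fin 4) k) ^ 2 =
            (X 0 * X 2) * (X 0 * X 2 + X 1 * X 3) - (X 2 * X 3) * (X 0 * X 1) := by ring
        rw [h]
        exact sub_mem (Ideal.mul_mem_left _ _ hsumI) (Ideal.mul_mem_left _ _ huvI)
      · refine Ideal.mem_radical_iff.mpr ⟨2, ?_⟩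
        have h : (X 1 * X 3 : MvPolynomial (Fin 4) k) ^ 2 =
            (X 1 * X 3) * (X 0 * X 2 + X 1 * X 3) - (X 2 * X 3) * (X 0 * X 1) := by ring
        rw [h]
        exact sub_mem (Ideal.mul_mem_left _ _ hsumI) (Ideal.mul_mem_left _ _ huvI)
  refine ⟨hrad, ?_⟩
  ext Q
  simp only [Ideal.minimalPrimes, Set.mem_setOf_eq, Set.mem_insert_iff, Set.mem_singleton_iff]
  constructor
  · rintro ⟨⟨hQp, hIQ⟩, hQmin⟩
    have huv : (X 0 * X 1 : MvPolynomial (Fin 4) k) ∈ Q := hIQ huvI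
    have hsum : (X 0 * X 2 + X 1 * X 3 : MvPolynomial (Fin 4) k) ∈ Q := hIQ hsumI
    have hfin : ∀ (P : Ideal (MvPolynomial (Fin 4) k)), P.IsPrime → I ≤ P → P ≤ Q → Q = P :=
      fun P hp hip hle => le_antisymm (hQmin ⟨hp, hip⟩ hle) hle
    rcases hQp.mem_or_mem huv with h0 | h1
    · have h13 : (X 1 * X 3 : MvPolynomial (Fin 4) k) ∈ Q := by
        have h : (X 1 * X 3 : MvPolynomial (Fin 4) k) =
            (X 0 * X 2 + X 1 * X 3) - (X 0 * X 2) := by ring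
        rw [h]
        exact sub_mem hsum (Ideal.mul_mem_right _ _ h0)
      rcases hQp.mem_or_mem h13 with h1 | h3
      · left
        exact hfin P1 hP1 hIP1 (by rw [hP1def, Ideal.span_le]; rintro x (rfl | rfl) <;>
          assumption)
      · right; right
        exact hfin P3 hP3 hIP3 (by rw [hP3def, Ideal.span_le]; rintro x (rfl | rfl) <;>
          assumption)
    · have h02 : (X 0 * X 2 : MvPolynomial (Fin 4) k) ∈ Q := by
        have h : (X 0 * X 2 : MvPolynomial (Fin 4) k) =
            (X 0 * X 2 + X 1 * X 3) - (X 1 * X 3) := by ring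
        rw [h]
        exact sub_mem hsum (Ideal.mul_mem_right _ _ h1)
      rcases hQp.mem_or_mem h02 with h0 | h2
      · left
        exact hfin P1 hP1 hIP1 (by rw [hP1def, Ideal.span_le]; rintro x (rfl | rfl) <;>
          assumption)
      · right; left
        exact hfin P2 hP2 hIP2 (by rw [hP2def, Ideal.span_le]; rintro x (rfl | rfl) <;>
          assumption)
  · rintro (rfl | rfl | rfl)
    · refine ⟨⟨hP1, hIP1⟩, ?_⟩
      rintro Q' ⟨hQ'p, hIQ'⟩ hle
      have huv : (X 0 * X 1 : MvPolynomial (Fin 4) k) ∈ Q' := hIQ' huvI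
      have hsum : (X 0 * X 2 + X 1 * X 3 : MvPolynomial (Fin 4) k) ∈ Q' := hIQ' hsumI
      rcases hQ'p.mem_or_mem huv with h0 | h1
      · have h13 : (X 1 * X 3 : MvPolynomial (Fin 4) k) ∈ Q' := by
          have h : (X 1 * X 3 : MvPolynomial (Fin 4) k) =
              (X 0 * X 2 + X 1 * X 3) - (X 0 * X 2) := by ring
          rw [h]; exact sub_mem hsum (Ideal.mul_mem_right _ _ h0)
        rcases hQ'p.mem_or_mem h13 with h1 | h3
        · rw [hP1def, Ideal.span_le]; rintro x (rfl | rfl) <;> assumption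
        · exact absurd (hle h3) (aux_not_mem 0 1 3 (by decide) (by decide))
      · have h02 : (X 0 * X 2 : MvPolynomial (Fin 4) k) ∈ Q' := by
          have h : (X 0 * X 2 : MvPolynomial (Fin 4) k) =
              (X 0 * X 2 + X 1 * X 3) - (X 1 * X 3) := by ring
          rw [h]; exact sub_mem hsum (Ideal.mul_mem_right _ _ h1)
        rcases hQ'p.mem_or_mem h02 with h0 | h2
        · rw [hP1def, Ideal.span_le]; rintro x (rfl | rfl) <;> assumption
        · exact absurd (hle h2) (aux_not_mem 0 1 2 (by decide) (by decide))
    · refine ⟨⟨hP2, hIP2⟩, ?_⟩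
      rintro Q' ⟨hQ'p, hIQ'⟩ hle
      have huv : (X 0 * X 1 : MvPolynomial (Fin 4) k) ∈ Q' := hIQ' huvI
      have hsum : (X 0 * X 2 + X 1 * X 3 : MvPolynomial (Fin 4) k) ∈ Q' := hIQ' hsumI
      rcases hQ'p.mem_or_mem huv with h0 | h1
      · exact absurd (hle h0) (aux_not_mem 2 1 0 (by decide) (by decide))
      · have h02 : (X 0 * X 2 : MvPolynomial (Fin 4) k) ∈ Q' := by
          have h : (X 0 * X 2 : MvPolynomial (Fin 4) k) =
              (X 0 * X 2 + X 1 * X 3) - (X 1 * X 3) := by ring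
          rw [h]; exact sub_mem hsum (Ideal.mul_mem_right _ _ h1)
        rcases hQ'p.mem_or_mem h02 with h0 | h2
        · exact absurd (hle h0) (aux_not_mem 2 1 0 (by decide) (by decide))
        · rw [hP2def, Ideal.span_le]; rintro x (rfl | rfl) <;> assumption
    · refine ⟨⟨hP3, hIP3⟩, ?_⟩
      rintro Q' ⟨hQ'p, hIQ'⟩ hle
      have huv : (X 0 * X 1 : MvPolynomial (Fin 4) k) ∈ Q' := hIQ' huvI
      have hsum : (X 0 * X 2 + X 1 * X 3 : MvPolynomial (Fin 4) k) ∈ Q' := hIQ' hsumI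
      rcases hQ'p.mem_or_mem huv with h0 | h1
      · have h13 : (X 1 * X 3 : MvPolynomial (Fin 4) k) ∈ Q' := by
          have h : (X 1 * X 3 : MvPolynomial (Fin 4) k) =
              (X 0 * X 2 + X 1 * X 3) - (X 0 * X 2) := by ring
          rw [h]; exact sub_mem hsum (Ideal.mul_mem_right _ _ h0)
        rcases hQ'p.mem_or_mem h13 with h1 | h3
        · exact absurd (hle h1) (aux_not_mem 3 0 1 (by decide) (by decide))
        · rw [hP3def, Ideal.span_le]; rintro x (rfl | rfl) <;> assumption
      · exact absurd (hle h1) (aux_not_mem 3 0 1 (by decide) (by decide))
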